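/- arXiv:1801.08912 — 4 statements merged into one kernel-verified Lean document; each statement's English description precedes it below -/
import Mathlib

section
/- If G is strongly (2f+1)-robust with respect to S_j, then G contains a MEDAG for λ_j when the adversarial set A is f-local; i.e., there exists a spanning subgraph G_j of G such that every regular non-source node has at least 2f+1 in-neighbors in G_j, and the regular nodes partition into levels L_0 = S_j ∩ R, L_1, ..., L_T such that every regular node in L_m has all its regular G_j-in-neighbors in levels 0 through m−1. -/
def RReachable {V : Type*} [DecidableEq V] (Nbr : V → Finset V) (C : Finset V) (r : ℕ) : Prop :=
  ∃ i ∈ C, r ≤ ((Nbr i) \ C).card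

def StronglyRobust {V : Type*} [Fintype V] [DecidableEq V]
    (Nbr : V → Finset V) (S : Finset V) (r : ℕ) : Prop :=
  ∀ C : Finset V, C.Nonempty → C ⊆ Finset.univ \ S → RReachable Nbr C r

theorem exists_MEDAG_aux {V : Type*} [Fintype V] [DecidableEq V]
    (Nbr : V → Finset V) (S : Finset V) (f : ℕ) (R : Finset V)
    (hrobust : StronglyRobust Nbr S (2 * f + 1)) :
    ∀ n (D : Finset V), (R \ D).card ≤ n → S ∩ R ⊆ D → D ⊆ R →
      ∃ (T : ℕ) (L : ℕ → Finset V) (Nj : V → Finset V),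
        L 0 = D ∧ (∀ i, Nj i ⊆ Nbr i) ∧
        (∀ i ∈ R \ D, 2 * f + 1 ≤ (Nj i).card) ∧
        (∀ m m', m < m' → m' ≤ T → Disjoint (L m) (L m')) ∧
        (Finset.Icc 0 T).biUnion L = R ∧
        (∀ m, 1 ≤ m → m ≤ T → ∀ i ∈ L m,
          (Nj i) ∩ R ⊆ (Finset.Icc 0 (m - 1)).biUnion L) := by
  intro n
  induction n with
  | zero =>
    intro D hcard hSD hDR
    have hempty : R \ D = ∅ := Finset.card_eq_zero.mp (Nat.le_zero.mp hcard)
    have hRD : R = D := by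
      apply Finset.Subset.antisymm _ hDR
      intro x hx
      by_contra hxD
      exact (Finset.notMem_empty x) (hempty ▸ Finset.mem_sdiff.mpr ⟨hx, hxD⟩)
    refine ⟨0, fun _ => D, fun _ => ∅, rfl, fun i => Finset.empty_subset _, ?_, ?_, ?_, ?_⟩
    · intro i hi; rw [hempty] at hi; exact absurd hi (Finset.notMem_empty i)
    · intro m m' h h'; omega
    · simp [hRD]
    · intro m hm hm'; omega
  | succ n ih =>
    intro D hcard hSD hDR
    by_cases hne : (R \ D).Nonempty
    · have hCsub : R \ D ⊆ Finset.univ \ S := by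
        intro x hx
        rw [Finset.mem_sdiff] at hx ⊢
        exact ⟨Finset.mem_univ x,
          fun hxS => hx.2 (hSD (Finset.mem_inter.mpr ⟨hxS, hx.1⟩))⟩
      obtain ⟨i, hiC, hicard⟩ := hrobust (R \ D) hne hCsub
      have hiR : i ∈ R := (Finset.mem_sdiff.mp hiC).1
      have hiD : i ∉ D := (Finset.mem_sdiff.mp hiC).2
      have hcard' : (R \ insert i D).card ≤ n := by
        have heq : R \ insert i D = (R \ D).erase i := by
          ext x
          simp only [Finset.mem_sdiff, Finset.mem_erase, Finset.mem_insert]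
          tauto
        rw [heq, Finset.card_erase_of_mem hiC]
        omega
      obtain ⟨T', L', Nj', hL0', hsub', hcardN', hdisj', hun', hlev'⟩ :=
        ih (insert i D) hcard' (hSD.trans (Finset.subset_insert i D))
          (Finset.insert_subset hiR hDR)
      set L : ℕ → Finset V :=
        fun m => if m = 0 then D else if m = 1 then {i} else L' (m - 1) with hLdef
      set Nj : V → Finset V :=
        fun x => if x = i then Nbr i \ (R \ D) else Nj' x with hNjdef
      have hL0 : L 0 = D := by simp [hLdef]
      have hL1 : L 1 = {i} := by simp [hLdef]
      have hLk : ∀ m, 2 ≤ m → L m = L' (m - 1) := by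
        intro m hm
        simp only [hLdef]
        rw [if_neg (by omega), if_neg (by omega)]
      refine ⟨T' + 1, L, Nj, hL0, ?_, ?_, ?_, ?_, ?_⟩
      · intro x
        by_cases hx : x = i
        · subst hx; simp only [hNjdef, if_pos rfl]; exact Finset.sdiff_subset
        · simp only [hNjdef, if_neg hx]; exact hsub' x
      · intro x hx
        by_cases hxi : x = i
        · subst hxi; simp only [hNjdef, if_pos rfl]; exact hicard
        · simp only [hNjdef, if_neg hxi]
          apply hcardN'
          rw [Finset.mem_sdiff] at hx ⊢
          exact ⟨hx.1, by simp [Finset.mem_insert, hxi, hx.2]⟩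
      · intro m m' hlt hle
        rcases Nat.lt_or_ge m' 2 with hm' | hm'
        · interval_cases m' <;> interval_cases m
          rw [hL0, hL1]
          exact Finset.disjoint_singleton_right.mpr hiD
        · rw [hLk m' hm']
          have h1 : m' - 1 ≤ T' := by omega
          rcases Nat.lt_or_ge m 2 with hm | hm
          · have hd0 := hdisj' 0 (m' - 1) (by omega) h1
            interval_cases m
            · rw [hL0]
              exact hd0.mono_left (by rw [hL0']; exact Finset.subset_insert i D)
            · rw [hL1]
              exact hd0.mono_left (by rw [hL0']; simp)
          · rw [hLk m hm]
            exact hdisj' (m - 1) (m' - 1) (by omega) h1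
      · ext x
        simp only [Finset.mem_biUnion, Finset.mem_Icc]
        constructor
        · rintro ⟨m, ⟨-, hmT⟩, hxm⟩
          rcases Nat.lt_or_ge m 2 with hm | hm
          · interval_cases m
            · rw [hL0] at hxm
              have : x ∈ (Finset.Icc 0 T').biUnion L' := by
                refine Finset.mem_biUnion.mpr ⟨0, by simp, ?_⟩
                rw [hL0']; exact Finset.mem_insert_of_mem hxm
              rw [hun'] at this; exact this
            · rw [hL1] at hxm
              rw [Finset.mem_singleton] at hxm; subst hxm; exact hiR
          · rw [hLk m hm] at hxm
            have : x ∈ (Finset.Icc 0 T').biUnion L' :=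
              Finset.mem_biUnion.mpr ⟨m - 1, by simp; omega, hxm⟩
            rw [hun'] at this; exact this
        · intro hxR
          have : x ∈ (Finset.Icc 0 T').biUnion L' := by rw [hun']; exact hxR
          obtain ⟨k, hk, hxk⟩ := Finset.mem_biUnion.mp this
          simp only [Finset.mem_Icc] at hk
          rcases Nat.eq_zero_or_pos k with hk0 | hk1
          · subst hk0
            rw [hL0', Finset.mem_insert] at hxk
            rcases hxk with h | h
            · exact ⟨1, ⟨by omega, by omega⟩, by rw [hL1]; simp [h]⟩
            · exact ⟨0, ⟨le_refl 0, by omega⟩, by rw [hL0]; exact h⟩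
          · refine ⟨k + 1, ⟨by omega, by omega⟩, ?_⟩
            rw [hLk (k + 1) (by omega)]
            simpa using hxk
      · intro m hm1 hmT x hxm
        rcases Nat.lt_or_ge m 2 with hm | hm
        · interval_cases m
          rw [hL1, Finset.mem_singleton] at hxm
          subst hxm
          intro y hy
          simp only [hNjdef, if_pos rfl, Finset.mem_inter, Finset.mem_sdiff] at hy
          have hyD : y ∈ D := by
            rcases hy with ⟨⟨-, hnot⟩, hyR⟩
            by_contra hyD
            exact hnot ⟨hyR, hyD⟩
          exact Finset.mem_biUnion.mpr ⟨0, by simp, by rw [hL0]; exact hyD⟩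
        · rw [hLk m hm] at hxm
          have hm1T' : m - 1 ≤ T' := by omega
          have hxi : x ≠ i := by
            intro h
            subst h
            have hd := hdisj' 0 (m - 1) (by omega) hm1T'
            exact (Finset.disjoint_left.mp hd (by rw [hL0']; simp)) hxm
          have hsub := hlev' (m - 1) (by omega) hm1T' x hxm
          intro y hy
          simp only [hNjdef, if_neg hxi] at hy
          have hy' := hsub hy
          obtain ⟨k, hk, hyk⟩ := Finset.mem_biUnion.mp hy'
          simp only [Finset.mem_Icc] at hk
          rcases Nat.eq_zero_or_pos k with hk0 | hk1
          · subst hk0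
            rw [hL0', Finset.mem_insert] at hyk
            rcases hyk with h | h
            · exact Finset.mem_biUnion.mpr ⟨1, by simp; omega, by rw [hL1]; simp [h]⟩
            · exact Finset.mem_biUnion.mpr ⟨0, by simp, by rw [hL0]; exact h⟩
          · refine Finset.mem_biUnion.mpr ⟨k + 1, by simp; omega, ?_⟩
            rw [hLk (k + 1) (by omega)]
            simpa using hyk
    · rw [Finset.not_nonempty_iff_eq_empty] at hne
      exact ih D (by simp [hne]) hSD hDR

/-- If `G` is strongly `(2f+1)`-robust w.r.t. the source set `S` and the
adversarial set `A` is `f`-local, then `G` contains a MEDAG for the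
corresponding mode: a spanning subgraph (given by sub-neighborhoods
`Nj i ⊆ Nbr i`) in which every regular non-source node has at least `2f+1`
in-neighbors, and the regular nodes `R = V \ A` partition into levels
`L 0 = S ∩ R, L 1, ..., L T` such that every regular node in level `m ≥ 1`
has all of its regular in-neighbors in levels `0, ..., m-1`. -/
theorem exists_MEDAG {V : Type*} [Fintype V] [DecidableEq V]
    (Nbr : V → Finset V) (S A : Finset V) (f : ℕ)
    (R : Finset V) (hR : R = Finset.univ \ A)
    (hlocal : ∀ i ∈ R, ((Nbr i) ∩ A).card ≤ f)
    (hrobust : StronglyRobust Nbr S (2 * f + 1)) :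
    ∃ Nj : V → Finset V,
      (∀ i : V, Nj i ⊆ Nbr i) ∧
      (∀ i ∈ R, i ∉ S → 2 * f + 1 ≤ (Nj i).card) ∧
      ∃ (T : ℕ) (L : ℕ → Finset V),
        L 0 = S ∩ R ∧
        (∀ m m', m < m' → m' ≤ T → Disjoint (L m) (L m')) ∧
        (Finset.Icc 0 T).biUnion L = R ∧
        (∀ m, 1 ≤ m → m ≤ T → ∀ i ∈ L m,
          (Nj i) ∩ R ⊆ (Finset.Icc 0 (m - 1)).biUnion L) := by
  obtain ⟨T, L, Nj, hL0, hsub, hcard, hdisj, hun, hlev⟩ :=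
    exists_MEDAG_aux Nbr S f R hrobust (R \ (S ∩ R)).card (S ∩ R) le_rfl
      (Finset.Subset.refl _) Finset.inter_subset_right
  refine ⟨Nj, hsub, ?_, T, L, hL0, hdisj, hun, hlev⟩
  intro i hiR hiS
  exact hcard i (Finset.mem_sdiff.mpr ⟨hiR, fun h => hiS (Finset.mem_inter.mp h).1⟩)
end

section
/- Let a finite multiset of at least 2f+1 real values be given, of which at most f are labeled 'adversarial' and the rest 'regular'. After removing the f largest and f smallest values, every remaining value lies in the closed interval [min of regular values, max of regular values]; in particular, every remaining value is a convex combination of two regular values. -/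
/-- Trimming the `f` largest and `f` smallest of at least `2f+1` values, of
which at most `f` are adversarial: every surviving value lies between the
minimum and maximum regular values, hence is a convex combination of two
regular values. -/
theorem trimmed_values_in_regular_range
    {n f : ℕ} (hn : 2 * f + 1 ≤ n)
    (x : Fin n → ℝ)
    (A : Finset (Fin n)) (hA : A.card ≤ f)
    (R : Finset (Fin n)) (hR : R = Finset.univ \ A)
    (U J M : Finset (Fin n))
    (hU : U.card = f) (hJ : J.card = f) (hUJ : Disjoint U J)
    (hM : M = Finset.univ \ (U ∪ J))
    (hhigh : ∀ u ∈ U, ∀ i ∈ M, x i ≤ x u)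
    (hlow : ∀ j ∈ J, ∀ i ∈ M, x j ≤ x i) :
    ∀ i ∈ M, ∃ a ∈ R, ∃ b ∈ R,
      x b ≤ x i ∧ x i ≤ x a ∧
      (∀ l ∈ R, x b ≤ x l ∧ x l ≤ x a) ∧
      ∃ α : ℝ, α ∈ Set.Icc (0 : ℝ) 1 ∧ x i = α * x a + (1 - α) * x b := by
  intro i hi
  -- R is nonempty
  have hRcard : f + 1 ≤ R.card := by
    have : R.card = n - A.card := by
      rw [hR, Finset.card_sdiff_of_subset (Finset.subset_univ A), Finset.card_univ, Fintype.card_fin]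
    omega
  have hRne : R.Nonempty := Finset.card_pos.mp (by omega)
  obtain ⟨a, haR, ha⟩ := R.exists_max_image x hRne
  obtain ⟨b, hbR, hb⟩ := R.exists_min_image x hRne
  -- existence of a regular element above x i
  have hup : x i ≤ x a := by
    have hcard : A.card < (insert i U).card := by
      have hiU : i ∉ U := by
        rw [hM] at hi
        simp only [Finset.mem_sdiff, Finset.mem_union] at hi
        tauto
      rw [Finset.card_insert_of_notMem hiU, hU]; omega
    obtain ⟨r, hrU, hrA⟩ := Finset.not_subset.mp (show ¬ insert i U ⊆ A from fun hsub => absurd (Finset.card_le_card hsub) (by omega))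
    have hrR : r ∈ R := by rw [hR]; simp [hrA]
    rcases Finset.mem_insert.mp hrU with h | h
    · exact h ▸ ha r hrR
    · exact le_trans (hhigh r h i hi) (ha r hrR)
  have hdown : x b ≤ x i := by
    have hcard : A.card < (insert i J).card := by
      have hiJ : i ∉ J := by
        rw [hM] at hi
        simp only [Finset.mem_sdiff, Finset.mem_union] at hi
        tauto
      rw [Finset.card_insert_of_notMem hiJ, hJ]; omega
    obtain ⟨r, hrJ, hrA⟩ := Finset.not_subset.mp (show ¬ insert i J ⊆ A from fun hsub => absurd (Finset.card_le_card hsub) (by omega))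
    have hrR : r ∈ R := by rw [hR]; simp [hrA]
    rcases Finset.mem_insert.mp hrJ with h | h
    · exact h ▸ hb r hrR
    · exact le_trans (hb r hrR) (hlow r h i hi)
  refine ⟨a, haR, b, hbR, hdown, hup, fun l hl => ⟨hb l hl, ha l hl⟩, ?_⟩
  by_cases hab : x a = x b
  · refine ⟨0, by simp, ?_⟩
    have : x i = x b := le_antisymm (hab ▸ hup) hdown
    simp [this]
  · have hlt : x b < x a := lt_of_le_of_ne (le_trans hdown hup) (Ne.symm hab)
    refine ⟨(x i - x b) / (x a - x b), ⟨div_nonneg (by linarith) (by linarith),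
      (div_le_one (by linarith)).mpr (by linarith)⟩, ?_⟩
    have h0 : x a - x b ≠ 0 := by linarith
    field_simp
    ring
end

section
/- Let a finite multiset of at least 2f+1 real values be given, at most f of which are adversarial. After removing the f largest and f smallest values and taking any convex combination w of the remaining values, the result lies in the convex hull of the regular values; consequently if all regular values v_l satisfy |v_l − z| ≤ ε for a common target z, then |w − z| ≤ ε. -/
/-- Trimming the `f` largest and `f` smallest of at least `2f+1` values with at
most `f` adversarial values: any convex combination of the surviving values lies
in the convex hull of the regular values; consequently, if every regular value
is `ε`-close to a target `z`, so is the combination. -/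
theorem trimmed_convex_combination_in_regular_hull
    {n f : ℕ} (hn : 2 * f + 1 ≤ n)
    (x : Fin n → ℝ)
    (A : Finset (Fin n)) (hA : A.card ≤ f)
    (R : Finset (Fin n)) (hR : R = Finset.univ \ A)
    (U J M : Finset (Fin n))
    (hU : U.card = f) (hJ : J.card = f) (hUJ : Disjoint U J)
    (hM : M = Finset.univ \ (U ∪ J))
    (hhigh : ∀ u ∈ U, ∀ i ∈ M, x i ≤ x u)
    (hlow : ∀ j ∈ J, ∀ i ∈ M, x j ≤ x i)
    (w : Fin n → ℝ) (hw0 : ∀ l ∈ M, 0 ≤ w l) (hw1 : ∑ l ∈ M, w l = 1) :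
    (∑ l ∈ M, w l * x l) ∈ convexHull ℝ (↑(R.image x) : Set ℝ) ∧
    ∀ (z ε : ℝ), 0 ≤ ε → (∀ l ∈ R, |x l - z| ≤ ε) →
      |(∑ l ∈ M, w l * x l) - z| ≤ ε := by
  have hRne : R.Nonempty := by
    rw [hR]
    have hcard : (Finset.univ \ A : Finset (Fin n)).card =
        n - A.card := by
      rw [Finset.card_sdiff_of_subset (Finset.subset_univ A)]
      simp
    rw [← Finset.card_pos, hcard]
    omega
  set a := R.inf' hRne x with ha
  set b := R.sup' hRne x with hb
  have hab : a ≤ b := by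
    obtain ⟨i, hi⟩ := hRne
    exact le_trans (Finset.inf'_le x hi) (Finset.le_sup' x hi)
  -- every surviving value is bounded above by b
  have hub : ∀ l ∈ M, x l ≤ b := by
    intro l hl
    by_cases h : ∃ u ∈ U, u ∈ R
    · obtain ⟨u, hu, huR⟩ := h
      exact le_trans (hhigh u hu l hl) (Finset.le_sup' x huR)
    · push_neg at h
      have hUA : U ⊆ A := by
        intro u hu
        have := h u hu
        rw [hR] at this
        simpa using this
      have hAU : A = U := (Finset.eq_of_subset_of_card_le hUA (hU ▸ hA)).symm
      have hlR : l ∈ R := by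
        rw [hR]
        simp only [Finset.mem_sdiff, Finset.mem_univ, true_and]
        rw [hAU]
        rw [hM] at hl
        simp only [Finset.mem_sdiff, Finset.mem_union] at hl
        tauto
      exact Finset.le_sup' x hlR
  -- every surviving value is bounded below by a
  have hlb : ∀ l ∈ M, a ≤ x l := by
    intro l hl
    by_cases h : ∃ j ∈ J, j ∈ R
    · obtain ⟨j, hj, hjR⟩ := h
      exact le_trans (Finset.inf'_le x hjR) (hlow j hj l hl)
    · push_neg at h
      have hJA : J ⊆ A := by
        intro j hj
        have := h j hj
        rw [hR] at this
        simpa using this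
      have hAJ : A = J := (Finset.eq_of_subset_of_card_le hJA (hJ ▸ hA)).symm
      have hlR : l ∈ R := by
        rw [hR]
        simp only [Finset.mem_sdiff, Finset.mem_univ, true_and]
        rw [hAJ]
        rw [hM] at hl
        simp only [Finset.mem_sdiff, Finset.mem_union] at hl
        tauto
      exact Finset.inf'_le x hlR
  have hsum_ub : (∑ l ∈ M, w l * x l) ≤ b := by
    calc (∑ l ∈ M, w l * x l) ≤ ∑ l ∈ M, w l * b :=
          Finset.sum_le_sum fun l hl =>
            mul_le_mul_of_nonneg_left (hub l hl) (hw0 l hl)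
      _ = b := by rw [← Finset.sum_mul, hw1, one_mul]
  have hsum_lb : a ≤ (∑ l ∈ M, w l * x l) := by
    calc a = ∑ l ∈ M, w l * a := by rw [← Finset.sum_mul, hw1, one_mul]
      _ ≤ ∑ l ∈ M, w l * x l :=
          Finset.sum_le_sum fun l hl =>
            mul_le_mul_of_nonneg_left (hlb l hl) (hw0 l hl)
  obtain ⟨ia, hia, hxa⟩ := R.exists_mem_eq_inf' hRne x
  obtain ⟨ib, hib, hxb⟩ := R.exists_mem_eq_sup' hRne x
  constructor
  · have hseg : segment ℝ a b ⊆ convexHull ℝ (↑(R.image x) : Set ℝ) := by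
      apply segment_subset_convexHull
      · simp only [Finset.coe_image, Set.mem_image]
        exact ⟨ia, hia, hxa.symm⟩
      · simp only [Finset.coe_image, Set.mem_image]
        exact ⟨ib, hib, hxb.symm⟩
    apply hseg
    rw [segment_eq_Icc hab]
    exact ⟨hsum_lb, hsum_ub⟩
  · intro z ε hε hclose
    have h1 : z - ε ≤ a := by
      have := hclose ia hia
      rw [abs_le] at this
      rw [ha, hxa]; linarith [this.1]
    have h2 : b ≤ z + ε := by
      have := hclose ib hib
      rw [abs_le] at this
      rw [hb, hxb]; linarith [this.2]
    rw [abs_le]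
    constructor <;> linarith
end

section
/- Let γ ∈ (0,1), |λ| ≥ 1, T ∈ ℕ. If inputs satisfy |e_l[k]| ≤ β_q γ^k for all k ≥ (T+1)q, then the output of the delayed weighted recursion e[k+1] = λ Σ_l w_l λ^{τ_l} e_l[k−τ_l] (weights nonnegative summing to 1, at most N terms, delays ≤ T) satisfies |e[k]| ≤ β_{q+1} γ^k for all k ≥ (T+1)(q+1), where β_{q+1} = β_q · N · (|λ|/γ)^{T+1}. Consequently, after q levels of such composition, |e[k]| ≤ β [N (|λ|/γ)^{T+1}]^q γ^k for all k ≥ (T+1)q. -/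
/-- Constant propagation across one level of the delayed weighted recursion, and
the resulting `q`-level composed bound
`|e[k]| ≤ β (N (|λ|/γ)^{T+1})^q γ^k` for `k ≥ (T+1)q`. -/
theorem delayed_consensus_level_bounds
    {ι : Type*} [DecidableEq ι]
    (lam γ : ℝ) (hlam : 1 ≤ |lam|) (hγ0 : 0 < γ) (hγ1 : γ < 1)
    (T N : ℕ) (hN : 1 ≤ N) (β : ℝ) (hβ : 0 < β) :
    -- One-step constant update: from level-`q` inputs bounded by `βq γ^k` to a
    -- level-`q+1` output bounded by `βq · N · (|λ|/γ)^{T+1} γ^k`.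
    ((∀ (q : ℕ) (βq : ℝ), 0 < βq →
      ∀ (M : ℕ → Finset ι) (w : ℕ → ι → ℝ) (τ : ℕ → ι → ℕ) (e : ι → ℕ → ℝ) (E : ℕ → ℝ),
      (∀ k, (M k).card ≤ N) →
      (∀ k, ∀ l ∈ M k, 0 ≤ w k l) →
      (∀ k, (T + 1) * q + T ≤ k → ∑ l ∈ M k, w k l = 1) →
      (∀ k, ∀ l ∈ M k, τ k l ≤ T) →
      (∀ l k, (T + 1) * q ≤ k → |e l k| ≤ βq * γ ^ k) →
      (∀ k, (T + 1) * q + T ≤ k →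
        E (k + 1) = lam * ∑ l ∈ M k, w k l * lam ^ (τ k l) * e l (k - τ k l)) →
      ∀ k, (T + 1) * (q + 1) ≤ k → |E k| ≤ βq * N * (|lam| / γ) ^ (T + 1) * γ ^ k)) ∧
    -- Consequence: `q`-fold composition across levels.
    (∀ (Est : ℕ → ι → ℕ → ℝ)
      (M : ℕ → ι → ℕ → Finset ι) (w : ℕ → ι → ℕ → ι → ℝ) (τ : ℕ → ι → ℕ → ι → ℕ),
      (∀ q l k, (M q l k).card ≤ N) →
      (∀ q l k, ∀ j ∈ M q l k, 0 ≤ w q l k j) →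
      (∀ q l k, (T + 1) * q + T ≤ k → ∑ j ∈ M q l k, w q l k j = 1) →
      (∀ q l k, ∀ j ∈ M q l k, τ q l k j ≤ T) →
      (∀ l k, |Est 0 l k| ≤ β * γ ^ k) →
      (∀ q l k, (T + 1) * q + T ≤ k →
        Est (q + 1) l (k + 1) =
          lam * ∑ j ∈ M q l k, w q l k j * lam ^ (τ q l k j) * Est q j (k - τ q l k j)) →
      ∀ q l k, (T + 1) * q ≤ k →
        |Est q l k| ≤ β * (N * (|lam| / γ) ^ (T + 1)) ^ q * γ ^ k) := by
  have hγne : (γ : ℝ) ≠ 0 := hγ0.ne'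
  have hlam0 : (0 : ℝ) < |lam| := lt_of_lt_of_le one_pos hlam
  have hdiv1 : 1 ≤ |lam| / γ := (one_le_div hγ0).mpr (le_trans hγ1.le hlam)
  have hdiv0 : (0 : ℝ) < |lam| / γ := div_pos hlam0 hγ0
  have hN0 : (0 : ℝ) < (N : ℝ) := by exact_mod_cast Nat.lt_of_lt_of_le Nat.zero_lt_one hN
  have main : ∀ (q : ℕ) (βq : ℝ), 0 < βq →
      ∀ (M : ℕ → Finset ι) (w : ℕ → ι → ℝ) (τ : ℕ → ι → ℕ) (e : ι → ℕ → ℝ) (E : ℕ → ℝ),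
      (∀ k, (M k).card ≤ N) →
      (∀ k, ∀ l ∈ M k, 0 ≤ w k l) →
      (∀ k, (T + 1) * q + T ≤ k → ∑ l ∈ M k, w k l = 1) →
      (∀ k, ∀ l ∈ M k, τ k l ≤ T) →
      (∀ l k, (T + 1) * q ≤ k → |e l k| ≤ βq * γ ^ k) →
      (∀ k, (T + 1) * q + T ≤ k →
        E (k + 1) = lam * ∑ l ∈ M k, w k l * lam ^ (τ k l) * e l (k - τ k l)) →
      ∀ k, (T + 1) * (q + 1) ≤ k → |E k| ≤ βq * N * (|lam| / γ) ^ (T + 1) * γ ^ k := by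
    intro q βq hβq M w τ e E hcard hw hws hτ he hE k hk
    set A := (T + 1) * q with hA
    have hk1 : 1 ≤ k := by
      have h1 : T + 1 ≤ (T + 1) * (q + 1) := Nat.le_mul_of_pos_right _ (by omega)
      omega
    obtain ⟨k', rfl⟩ : ∃ k', k = k' + 1 := ⟨k - 1, by omega⟩
    have hk' : A + T ≤ k' := by
      rw [Nat.mul_succ] at hk; omega
    rw [hE k' hk', abs_mul]
    have hterm : ∀ j ∈ M k', |w k' j * lam ^ τ k' j * e j (k' - τ k' j)|
        ≤ w k' j * (βq * (|lam| / γ) ^ T * γ ^ k') := by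
      intro j hj
      have hτj := hτ k' j hj
      have hτk : τ k' j ≤ k' := by omega
      have hsub : A ≤ k' - τ k' j := by omega
      have he' := he j (k' - τ k' j) hsub
      rw [abs_mul, abs_mul, abs_pow, abs_of_nonneg (hw k' j hj)]
      have hkey : |lam| ^ τ k' j * (βq * γ ^ (k' - τ k' j))
          ≤ βq * (|lam| / γ) ^ T * γ ^ k' := by
        have hsplit : γ ^ k' = γ ^ (k' - τ k' j) * γ ^ τ k' j := by
          rw [← pow_add, Nat.sub_add_cancel hτk]
        have h1 : |lam| ^ τ k' j * (βq * γ ^ (k' - τ k' j))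
            = βq * (|lam| / γ) ^ τ k' j * γ ^ k' := by
          rw [hsplit, div_pow]
          field_simp
        rw [h1]
        have h2 : (|lam| / γ) ^ τ k' j ≤ (|lam| / γ) ^ T :=
          pow_le_pow_right₀ hdiv1 hτj
        have hγk : (0 : ℝ) < γ ^ k' := pow_pos hγ0 k'
        nlinarith [mul_pos hβq hγk]
      calc w k' j * |lam| ^ τ k' j * |e j (k' - τ k' j)|
          ≤ w k' j * (|lam| ^ τ k' j * (βq * γ ^ (k' - τ k' j))) := by
            rw [mul_assoc]
            have hpow : (0:ℝ) ≤ |lam| ^ τ k' j := pow_nonneg (abs_nonneg _) _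
            exact mul_le_mul_of_nonneg_left
              (mul_le_mul_of_nonneg_left he' hpow) (hw k' j hj)
        _ ≤ w k' j * (βq * (|lam| / γ) ^ T * γ ^ k') :=
            mul_le_mul_of_nonneg_left hkey (hw k' j hj)
    have hsum : |∑ j ∈ M k', w k' j * lam ^ τ k' j * e j (k' - τ k' j)|
        ≤ βq * (|lam| / γ) ^ T * γ ^ k' := by
      calc |∑ j ∈ M k', w k' j * lam ^ τ k' j * e j (k' - τ k' j)|
          ≤ ∑ j ∈ M k', |w k' j * lam ^ τ k' j * e j (k' - τ k' j)| :=
            Finset.abs_sum_le_sum_abs _ _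
        _ ≤ ∑ j ∈ M k', w k' j * (βq * (|lam| / γ) ^ T * γ ^ k') :=
            Finset.sum_le_sum hterm
        _ = (∑ j ∈ M k', w k' j) * (βq * (|lam| / γ) ^ T * γ ^ k') :=
            (Finset.sum_mul _ _ _).symm
        _ = βq * (|lam| / γ) ^ T * γ ^ k' := by rw [hws k' hk', one_mul]
    have heq : |lam| * (βq * (|lam| / γ) ^ T * γ ^ k')
        = βq * 1 * (|lam| / γ) ^ (T + 1) * γ ^ (k' + 1) := by
      rw [div_pow, div_pow]
      field_simp
      ring
    calc |lam| * |∑ j ∈ M k', w k' j * lam ^ τ k' j * e j (k' - τ k' j)|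
        ≤ |lam| * (βq * (|lam| / γ) ^ T * γ ^ k') :=
          mul_le_mul_of_nonneg_left hsum hlam0.le
      _ = βq * 1 * (|lam| / γ) ^ (T + 1) * γ ^ (k' + 1) := heq
      _ ≤ βq * N * (|lam| / γ) ^ (T + 1) * γ ^ (k' + 1) := by
          have h1N : (1 : ℝ) ≤ N := by exact_mod_cast hN
          gcongr
  refine ⟨main, ?_⟩
  intro Est M w τ hcard hw hws hτ h0 hrec q
  induction q with
  | zero =>
    intro l k _
    simpa using h0 l k
  | succ q ih =>
    intro l k hk
    have hβq : (0 : ℝ) < β * ((N : ℝ) * (|lam| / γ) ^ (T + 1)) ^ q :=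
      mul_pos hβ (pow_pos (mul_pos hN0 (pow_pos hdiv0 _)) _)
    have hstep := main q (β * ((N : ℝ) * (|lam| / γ) ^ (T + 1)) ^ q) hβq
      (M q l) (w q l) (τ q l) (Est q) (Est (q + 1) l)
      (hcard q l) (hw q l) (hws q l) (hτ q l)
      (fun j k hk => ih j k hk)
      (fun k hk => hrec q l k hk)
      k hk
    calc |Est (q + 1) l k|
        ≤ β * ((N : ℝ) * (|lam| / γ) ^ (T + 1)) ^ q * N * (|lam| / γ) ^ (T + 1) * γ ^ k :=
          hstep
      _ = β * ((N : ℝ) * (|lam| / γ) ^ (T + 1)) ^ (q + 1) * γ ^ k := by ring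
end
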